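/- Let d ≥ 1 and let u, v, w : ℝ × ℝ → ℝ^d be smooth (C^∞) functions, all 1-periodic in x, satisfying at every point the mixed system: u_t + v_x + w = 0, v = (1/2)‖u‖² u + u_xx, and w = ‖u‖² u_x − (u_x·u) u. Then the energy functional F₄(u)(t) = ∫₀¹ (1/2)‖u_x(x,t)‖² − (1/8)‖u(x,t)‖⁴ dx is constant in t; equivalently, its time derivative vanishes for every t. -/

import Mathlib

/-!
Conservation comes from a local balance law. Along solutions, the time derivative of the energy
density `½‖u_x‖² − ⅛‖u‖⁴` is the space derivative of the flux
`⟪u_x, u_t⟫ + ½‖v‖² + ½‖u‖²‖u_x‖² − ½⟪u, u_x⟫²`. Indeed, once `u_xt = u_tx` (Clairaut), the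
difference of the two is `⟪v, u_t + v_x⟫ + ‖u‖²⟪u_x, u_xx⟫ − ⟪u, u_x⟫⟪u, u_xx⟫ = ⟪u_xx − v, w⟫`,
which vanishes because `v − u_xx` is a multiple of `u` and `w ⊥ u`. The flux is periodic, so the
rate integrates to zero over a period, and differentiation under the integral sign (all integrands
are jointly continuous) shows that `F₄` has zero derivative.
-/

open Real MeasureTheory intervalIntegral InnerProductSpace ContDiff

/-- Partial derivative in the first (space) variable. -/
noncomputable def pdx {E : Type*} [NormedAddCommGroup E] [NormedSpace ℝ E]
    (u : ℝ → ℝ → E) : ℝ → ℝ → E := fun x t => deriv (fun y => u y t) x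

/-- Partial derivative in the second (time) variable. -/
noncomputable def pdt {E : Type*} [NormedAddCommGroup E] [NormedSpace ℝ E]
    (u : ℝ → ℝ → E) : ℝ → ℝ → E := fun x t => deriv (fun s => u x s) t

/-- The vectorial modified KdV equation `u_t + (3/2)‖u‖² u_x + u_xxx = 0`. -/
def IsVmKdV {d : ℕ} (u : ℝ → ℝ → EuclideanSpace ℝ (Fin d)) : Prop :=
  ∀ x t : ℝ,
    pdt u x t + ((3 : ℝ) / 2 * ‖u x t‖ ^ 2) • pdx u x t + pdx (pdx (pdx u)) x t = 0


open Function

section PartialDerivatives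

variable {E : Type*} [NormedAddCommGroup E] [NormedSpace ℝ E] {g : ℝ → ℝ → E}

theorem hasDerivAt_pdx (hg : Differentiable ℝ (uncurry g)) (x t : ℝ) :
    HasDerivAt (fun y => g y t) (pdx g x t) x :=
  (hg.comp (differentiable_id.prodMk (differentiable_const t)) x).hasDerivAt

theorem hasDerivAt_pdt (hg : Differentiable ℝ (uncurry g)) (x t : ℝ) :
    HasDerivAt (fun s => g x s) (pdt g x t) t :=
  (hg.comp ((differentiable_const x).prodMk differentiable_id) t).hasDerivAt

theorem uncurry_pdx_eq_fderiv (hg : Differentiable ℝ (uncurry g)) :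
    uncurry (pdx g) = fun p => fderiv ℝ (uncurry g) p (1, 0) :=
  funext fun (x, t) => (hasDerivAt_pdx hg x t).unique <|
    (hg (x, t)).hasFDerivAt.comp_hasDerivAt (f := fun y => (y, t)) x
      ((hasDerivAt_id x).prodMk (hasDerivAt_const x t))

theorem uncurry_pdt_eq_fderiv (hg : Differentiable ℝ (uncurry g)) :
    uncurry (pdt g) = fun p => fderiv ℝ (uncurry g) p (0, 1) :=
  funext fun (x, t) => (hasDerivAt_pdt hg x t).unique <|
    (hg (x, t)).hasFDerivAt.comp_hasDerivAt (f := fun s => (x, s)) t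
      ((hasDerivAt_const t x).prodMk (hasDerivAt_id t))

theorem contDiff_pdx {n : WithTop ℕ∞} (hg : ContDiff ℝ (n + 1) (uncurry g)) :
    ContDiff ℝ n (uncurry (pdx g)) := by
  rw [uncurry_pdx_eq_fderiv (hg.differentiable (by simp))]
  exact (hg.fderiv_right le_rfl).clm_apply contDiff_const

theorem contDiff_pdt {n : WithTop ℕ∞} (hg : ContDiff ℝ (n + 1) (uncurry g)) :
    ContDiff ℝ n (uncurry (pdt g)) := by
  rw [uncurry_pdt_eq_fderiv (hg.differentiable (by simp))]
  exact (hg.fderiv_right le_rfl).clm_apply contDiff_const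

theorem pdx_pdt_comm (hg : ContDiff ℝ 2 (uncurry g)) (x t : ℝ) :
    pdx (pdt g) x t = pdt (pdx g) x t := by
  have hdiff := hg.differentiable (by norm_num)
  have hfderiv : Differentiable ℝ (fderiv ℝ (uncurry g)) :=
    (hg.fderiv_right (m := 1) (by norm_num)).differentiable one_ne_zero
  have hsymm : IsSymmSndFDerivAt ℝ (uncurry g) (x, t) :=
    hg.contDiffAt.isSymmSndFDerivAt (by simp [minSmoothness_of_isRCLikeNormedField])
  change uncurry (pdx (pdt g)) (x, t) = uncurry (pdt (pdx g)) (x, t)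
  rw [uncurry_pdx_eq_fderiv ((contDiff_pdt (n := 1) hg).differentiable one_ne_zero),
    uncurry_pdt_eq_fderiv ((contDiff_pdx (n := 1) hg).differentiable one_ne_zero),
    uncurry_pdt_eq_fderiv hdiff, uncurry_pdx_eq_fderiv hdiff]
  dsimp only
  rw [fderiv_clm_apply (hfderiv _) (differentiableAt_const _),
    fderiv_clm_apply (hfderiv _) (differentiableAt_const _)]
  simpa using hsymm (1, 0) (0, 1)

theorem pdx_add_period {c : ℝ} (hper : ∀ x t, g (x + c) t = g x t) (x t : ℝ) :
    pdx g (x + c) t = pdx g x t := by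
  simp only [pdx]
  rw [← deriv_comp_add_const]
  simp only [hper]

theorem pdt_add_period {c : ℝ} (hper : ∀ x t, g (x + c) t = g x t) (x t : ℝ) :
    pdt g (x + c) t = pdt g x t := by
  simp only [pdt, hper]

end PartialDerivatives

theorem hasDerivAt_intervalIntegral_of_continuous {E : Type*} [NormedAddCommGroup E]
    [NormedSpace ℝ E] {F F' : ℝ → ℝ → E} (hF : Continuous (uncurry F))
    (hF' : Continuous (uncurry F')) (hderiv : ∀ s x, HasDerivAt (fun s => F s x) (F' s x) s)
    (a b s₀ : ℝ) :
    HasDerivAt (fun s => ∫ x in a..b, F s x) (∫ x in a..b, F' s₀ x) s₀ := by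
  have hslice {G : ℝ → ℝ → E} (hG : Continuous (uncurry G)) (s : ℝ) : Continuous (G s) :=
    hG.comp (continuous_const.prodMk continuous_id)
  obtain ⟨C, hC⟩ := (isCompact_closedBall s₀ 1).prod isCompact_uIcc |>.exists_bound_of_continuousOn
    (hF'.continuousOn (f := uncurry F') (s := Metric.closedBall s₀ 1 ×ˢ Set.uIcc a b))
  refine (intervalIntegral.hasDerivAt_integral_of_dominated_loc_of_deriv_le
    (Metric.closedBall_mem_nhds s₀ one_pos) (bound := fun _ => C)
    (.of_forall fun s => (hslice hF s).aestronglyMeasurable) ((hslice hF s₀).intervalIntegrable a b)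
    (hslice hF' s₀).aestronglyMeasurable ?_ intervalIntegrable_const
    (.of_forall fun x _ s _ => hderiv s x)).2
  exact .of_forall fun x hx s hs => hC (s, x) ⟨hs, Set.uIoc_subset_uIcc hx⟩

section Energy

variable {F : Type*} [NormedAddCommGroup F] [InnerProductSpace ℝ F]

theorem mixed_system_energy_balance {u ux uxx ut v vx w : F} (h1 : ut + vx + w = 0)
    (h2 : v = ((1 : ℝ) / 2 * ‖u‖ ^ 2) • u + uxx) (h3 : w = ‖u‖ ^ 2 • ux - ⟪ux, u⟫_ℝ • u) :
    ⟪uxx, ut⟫_ℝ + ⟪v, vx⟫_ℝ + ‖u‖ ^ 2 * ⟪ux, uxx⟫_ℝ - ⟪u, ux⟫_ℝ * ⟪u, uxx⟫_ℝ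
      + 1 / 2 * ‖u‖ ^ 2 * ⟪u, ut⟫_ℝ = 0 := by
  obtain rfl : ut = -(vx + w) := eq_neg_of_add_eq_zero_left (by rwa [← add_assoc])
  subst h2 h3
  simp only [inner_add_left, inner_add_right, inner_sub_right, inner_neg_right,
    real_inner_smul_left, real_inner_smul_right, real_inner_self_eq_norm_sq]
  rw [real_inner_comm ux u, real_inner_comm uxx u, real_inner_comm uxx ux, real_inner_comm vx u,
    real_inner_comm vx uxx]
  ring

noncomputable def energyDensity (u : ℝ → ℝ → F) (x t : ℝ) : ℝ :=
  1 / 2 * ‖pdx u x t‖ ^ 2 - 1 / 8 * ‖u x t‖ ^ 4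

noncomputable def energyRate (u : ℝ → ℝ → F) (x t : ℝ) : ℝ :=
  ⟪pdx u x t, pdt (pdx u) x t⟫_ℝ - 1 / 2 * ‖u x t‖ ^ 2 * ⟪u x t, pdt u x t⟫_ℝ

noncomputable def energyFlux (u v : ℝ → ℝ → F) (x t : ℝ) : ℝ :=
  ⟪pdx u x t, pdt u x t⟫_ℝ + 1 / 2 * ‖v x t‖ ^ 2 + 1 / 2 * (‖u x t‖ ^ 2 * ‖pdx u x t‖ ^ 2)
    - 1 / 2 * ⟪u x t, pdx u x t⟫_ℝ ^ 2

variable {u v w : ℝ → ℝ → F}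

theorem hasDerivAt_energyDensity (hu : ContDiff ℝ 2 (uncurry u)) (x t : ℝ) :
    HasDerivAt (fun s => energyDensity u x s) (energyRate u x t) t := by
  have hu_t := hasDerivAt_pdt (hu.differentiable two_ne_zero) x t
  have hux_t := hasDerivAt_pdt ((contDiff_pdx (n := 1) hu).differentiable one_ne_zero) x t
  have := (hux_t.norm_sq.const_mul (1 / 2)).fun_sub ((hu_t.norm_sq.fun_pow 2).const_mul (1 / 8))
  have hdensity : (fun s => energyDensity u x s)
      = fun s => 1 / 2 * ‖pdx u x s‖ ^ 2 - 1 / 8 * (‖u x s‖ ^ 2) ^ 2 := by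
    funext s
    rw [energyDensity]
    ring
  rw [hdensity]
  refine this.congr_deriv ?_
  unfold energyRate
  push_cast
  ring

theorem hasDerivAt_energyFlux (hu : ContDiff ℝ 2 (uncurry u)) (hv : ContDiff ℝ 1 (uncurry v))
    {x t : ℝ} (h1 : pdt u x t + pdx v x t + w x t = 0)
    (h2 : v x t = ((1 : ℝ) / 2 * ‖u x t‖ ^ 2) • u x t + pdx (pdx u) x t)
    (h3 : w x t = ‖u x t‖ ^ 2 • pdx u x t - ⟪pdx u x t, u x t⟫_ℝ • u x t) :
    HasDerivAt (fun y => energyFlux u v y t) (energyRate u x t) x := by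
  have hu_x := hasDerivAt_pdx (hu.differentiable two_ne_zero) x t
  have hux_x := hasDerivAt_pdx ((contDiff_pdx (n := 1) hu).differentiable one_ne_zero) x t
  have hut_x := hasDerivAt_pdx ((contDiff_pdt (n := 1) hu).differentiable one_ne_zero) x t
  have hv_x := hasDerivAt_pdx (hv.differentiable one_ne_zero) x t
  have := (((hux_x.inner ℝ hut_x).fun_add (hv_x.norm_sq.const_mul (1 / 2))).fun_add
    ((hu_x.norm_sq.fun_mul hux_x.norm_sq).const_mul (1 / 2))).fun_sub
    (((hu_x.inner ℝ hux_x).fun_pow 2).const_mul (1 / 2))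
  refine this.congr_deriv ?_
  rw [energyRate, ← pdx_pdt_comm hu, real_inner_self_eq_norm_sq]
  linear_combination mixed_system_energy_balance h1 h2 h3

theorem energyFlux_add_period {c : ℝ} (huper : ∀ x t, u (x + c) t = u x t)
    (hvper : ∀ x t, v (x + c) t = v x t) (x t : ℝ) :
    energyFlux u v (x + c) t = energyFlux u v x t := by
  simp only [energyFlux, huper, hvper, pdx_add_period huper, pdt_add_period huper]

theorem continuous_energyDensity (hu : ContDiff ℝ 1 (uncurry u)) :
    Continuous (uncurry (energyDensity u)) := by
  have hux_cont := (contDiff_pdx (n := 0) hu).continuous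
  have hu_cont := hu.continuous
  unfold energyDensity
  fun_prop

theorem continuous_energyRate (hu : ContDiff ℝ 2 (uncurry u)) :
    Continuous (uncurry (energyRate u)) := by
  have hux := contDiff_pdx (n := 1) hu
  have huxt_cont := (contDiff_pdt (n := 0) hux).continuous
  have hut_cont := (contDiff_pdt (n := 1) hu).continuous
  have hux_cont := hux.continuous
  have hu_cont := hu.continuous
  unfold energyRate
  fun_prop

theorem integral_energyRate_eq_zero (hu : ContDiff ℝ 2 (uncurry u))
    (hv : ContDiff ℝ 1 (uncurry v)) {c : ℝ} (huper : ∀ x t, u (x + c) t = u x t)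
    (hvper : ∀ x t, v (x + c) t = v x t) (h1 : ∀ x t, pdt u x t + pdx v x t + w x t = 0)
    (h2 : ∀ x t, v x t = ((1 : ℝ) / 2 * ‖u x t‖ ^ 2) • u x t + pdx (pdx u) x t)
    (h3 : ∀ x t, w x t = ‖u x t‖ ^ 2 • pdx u x t - ⟪pdx u x t, u x t⟫_ℝ • u x t) (t : ℝ) :
    ∫ x in 0..c, energyRate u x t = 0 := by
  have hint : IntervalIntegrable (fun x => energyRate u x t) volume 0 c :=
    ((continuous_energyRate hu).comp (continuous_id.prodMk continuous_const)).intervalIntegrable _ _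
  rw [integral_eq_sub_of_hasDerivAt
    (fun x _ => hasDerivAt_energyFlux hu hv (h1 x t) (h2 x t) (h3 x t)) hint, sub_eq_zero]
  simpa using energyFlux_add_period huper hvper 0 t

theorem hasDerivAt_integral_energyDensity (hu : ContDiff ℝ 2 (uncurry u))
    (hv : ContDiff ℝ 1 (uncurry v)) {c : ℝ} (huper : ∀ x t, u (x + c) t = u x t)
    (hvper : ∀ x t, v (x + c) t = v x t) (h1 : ∀ x t, pdt u x t + pdx v x t + w x t = 0)
    (h2 : ∀ x t, v x t = ((1 : ℝ) / 2 * ‖u x t‖ ^ 2) • u x t + pdx (pdx u) x t)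
    (h3 : ∀ x t, w x t = ‖u x t‖ ^ 2 • pdx u x t - ⟪pdx u x t, u x t⟫_ℝ • u x t) (t : ℝ) :
    HasDerivAt (fun s => ∫ x in 0..c, energyDensity u x s) 0 t := by
  have := hasDerivAt_intervalIntegral_of_continuous (F := fun s x => energyDensity u x s)
    (F' := fun s x => energyRate u x s)
    ((continuous_energyDensity (hu.of_le one_le_two)).comp continuous_swap)
    ((continuous_energyRate hu).comp continuous_swap)
    (fun s x => hasDerivAt_energyDensity hu x s) 0 c t
  rwa [integral_energyRate_eq_zero hu hv huper hvper h1 h2 h3] at this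

end Energy

theorem vmkdv_mixed_system_conservative_general (d : ℕ)
    (u v w : ℝ → ℝ → EuclideanSpace ℝ (Fin d))
    (hu : ContDiff ℝ ∞ (Function.uncurry u))
    (hv : ContDiff ℝ ∞ (Function.uncurry v))
    (huper : ∀ x t : ℝ, u (x + 1) t = u x t)
    (hvper : ∀ x t : ℝ, v (x + 1) t = v x t)
    (h1 : ∀ x t : ℝ, pdt u x t + pdx v x t + w x t = 0)
    (h2 : ∀ x t : ℝ, v x t = ((1 : ℝ) / 2 * ‖u x t‖ ^ 2) • u x t + pdx (pdx u) x t)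
    (h3 : ∀ x t : ℝ,
      w x t = ‖u x t‖ ^ 2 • pdx u x t - ⟪pdx u x t, u x t⟫_ℝ • u x t) :
    (∀ s t : ℝ,
        (∫ x in (0:ℝ)..1, (1 : ℝ) / 2 * ‖pdx u x s‖ ^ 2 - (1 : ℝ) / 8 * ‖u x s‖ ^ 4)
          = ∫ x in (0:ℝ)..1, (1 : ℝ) / 2 * ‖pdx u x t‖ ^ 2 - (1 : ℝ) / 8 * ‖u x t‖ ^ 4)
      ∧ ∀ t : ℝ,
        deriv (fun s =>
          ∫ x in (0:ℝ)..1, (1 : ℝ) / 2 * ‖pdx u x s‖ ^ 2 - (1 : ℝ) / 8 * ‖u x s‖ ^ 4) t = 0 := by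
  have hE (t : ℝ) : HasDerivAt (fun s => ∫ x in (0 : ℝ)..1, energyDensity u x s) 0 t :=
    hasDerivAt_integral_energyDensity (hu.of_le (WithTop.coe_le_coe.mpr le_top))
      (hv.of_le (WithTop.coe_le_coe.mpr le_top)) huper hvper h1 h2 h3 t
  exact ⟨is_const_of_deriv_eq_zero (fun t => (hE t).differentiableAt) (fun t => (hE t).deriv),
    fun t => (hE t).deriv⟩

theorem vmkdv_mixed_system_conservative (d : ℕ) (hd : 1 ≤ d)
    (u v w : ℝ → ℝ → EuclideanSpace ℝ (Fin d))
    (hu : ContDiff ℝ ∞ (Function.uncurry u))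
    (hv : ContDiff ℝ ∞ (Function.uncurry v))
    (hw : ContDiff ℝ ∞ (Function.uncurry w))
    (huper : ∀ x t : ℝ, u (x + 1) t = u x t)
    (hvper : ∀ x t : ℝ, v (x + 1) t = v x t)
    (hwper : ∀ x t : ℝ, w (x + 1) t = w x t)
    (h1 : ∀ x t : ℝ, pdt u x t + pdx v x t + w x t = 0)
    (h2 : ∀ x t : ℝ, v x t = ((1 : ℝ) / 2 * ‖u x t‖ ^ 2) • u x t + pdx (pdx u) x t)
    (h3 : ∀ x t : ℝ,
      w x t = ‖u x t‖ ^ 2 • pdx u x t - ⟪pdx u x t, u x t⟫_ℝ • u x t) :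
    (∀ s t : ℝ,
        (∫ x in (0:ℝ)..1, (1 : ℝ) / 2 * ‖pdx u x s‖ ^ 2 - (1 : ℝ) / 8 * ‖u x s‖ ^ 4)
          = ∫ x in (0:ℝ)..1, (1 : ℝ) / 2 * ‖pdx u x t‖ ^ 2 - (1 : ℝ) / 8 * ‖u x t‖ ^ 4)
      ∧ ∀ t : ℝ,
        deriv (fun s =>
          ∫ x in (0:ℝ)..1, (1 : ℝ) / 2 * ‖pdx u x s‖ ^ 2 - (1 : ℝ) / 8 * ‖u x s‖ ^ 4) t = 0 :=
  vmkdv_mixed_system_conservative_general d u v w hu hv huper hvper h1 h2 h3
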